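/- Let μ and ν be good full non-atomic Borel probability measures on non-compact locally compact Cantor sets X and Y. If S(μ) = S(ν), then there exists a homeomorphism h : X → Y with μ(E) = ν(h(E)) for every Borel set E ⊆ X. -/

import Mathlib

open MeasureTheory Topology ENNReal TopologicalSpace

/-- A set is compact open. -/
def IsCompactOpen {X : Type*} [TopologicalSpace X] (U : Set X) : Prop :=
  IsCompact U ∧ IsOpen U

/-- The defective set of a measure: points all of whose compact open
neighbourhoods have infinite measure. -/
def DefectiveSet {X : Type*} [TopologicalSpace X] [MeasurableSpace X]
    (μ : Measure X) : Set X :=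
  {x | ∀ U : Set X, IsCompactOpen U → x ∈ U → μ U = ⊤}

/-- A compact open set `V` is good for `μ`. -/
def GoodSet {X : Type*} [TopologicalSpace X] [MeasurableSpace X]
    (μ : Measure X) (V : Set X) : Prop :=
  ∀ U : Set X, IsCompactOpen U → μ U < μ V →
    ∃ W : Set X, W ⊆ V ∧ IsCompactOpen W ∧ μ W = μ U

/-- The measure `μ` is good: every compact open set is good for `μ`. -/
def Good {X : Type*} [TopologicalSpace X] [MeasurableSpace X]
    (μ : Measure X) : Prop :=
  ∀ V : Set X, IsCompactOpen V → GoodSet μ V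

/-- The restriction of `μ` to the (open) subset `A` is good: compact open
subsets of the subspace `A` are exactly compact open subsets of `X` contained
in `A`. -/
def GoodOn {X : Type*} [TopologicalSpace X] [MeasurableSpace X]
    (μ : Measure X) (A : Set X) : Prop :=
  ∀ U V : Set X, IsCompactOpen U → U ⊆ A → IsCompactOpen V → V ⊆ A → μ U < μ V →
    ∃ W : Set X, W ⊆ V ∧ IsCompactOpen W ∧ μ W = μ U

/-- The compact open values set, as a set of extended nonnegative reals. -/
def SE {X : Type*} [TopologicalSpace X] [MeasurableSpace X]
    (μ : Measure X) : Set ℝ≥0∞ :=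
  {v | v ≠ ⊤ ∧ ∃ U : Set X, IsCompactOpen U ∧ μ U = v}

/-- The compact open values set of the restriction of `μ` to `A`. -/
def SEOn {X : Type*} [TopologicalSpace X] [MeasurableSpace X]
    (μ : Measure X) (A : Set X) : Set ℝ≥0∞ :=
  {v | v ≠ ⊤ ∧ ∃ U : Set X, IsCompactOpen U ∧ U ⊆ A ∧ μ U = v}

/-- The compact open values set, as a set of reals. -/
def Sreal {X : Type*} [TopologicalSpace X] [MeasurableSpace X]
    (μ : Measure X) : Set ℝ :=
  {r | ∃ U : Set X, IsCompactOpen U ∧ μ U ≠ ⊤ ∧ (μ U).toReal = r}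

/-- The compact open values set of the restriction of `μ` to `A`, as reals. -/
def SrealOn {X : Type*} [TopologicalSpace X] [MeasurableSpace X]
    (μ : Measure X) (A : Set X) : Set ℝ :=
  {r | ∃ U : Set X, IsCompactOpen U ∧ U ⊆ A ∧ μ U ≠ ⊤ ∧ (μ U).toReal = r}

/-- A measure is full if every non-empty open set has positive measure. -/
def IsFull {X : Type*} [TopologicalSpace X] [MeasurableSpace X]
    (μ : Measure X) : Prop :=
  ∀ U : Set X, IsOpen U → U.Nonempty → 0 < μ U

/-- A measure is non-atomic if every singleton has measure zero. -/
def NonAtomic {X : Type*} [MeasurableSpace X] (μ : Measure X) : Prop :=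
  ∀ x : X, μ {x} = 0

/-- The space has a countable basis consisting of compact open sets. -/
def HasCompactOpenBasis (X : Type*) [TopologicalSpace X] : Prop :=
  ∃ B : Set (Set X), B.Countable ∧ TopologicalSpace.IsTopologicalBasis B ∧
    ∀ U ∈ B, IsCompact U ∧ IsOpen U

/-- The space has no isolated points. -/
def NoIsolatedPoints (X : Type*) [TopologicalSpace X] : Prop :=
  ∀ x : X, ¬ IsOpen ({x} : Set X)

/-! Back and forth. Goodness together with `S(μ) = S(ν)` lets a compact open set `U ⊆ X` be
matched with a compact open subset of measure `μ U` of any compact open `V ⊆ Y` with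
`μ U ≤ ν V`; non-compactness leaves room of positive measure outside every compact open set.
This allows one to alternately enlarge and refine a finite matching `{(Uᵢ, Vᵢ)}` of disjoint
compact open sets with `μ Uᵢ = ν Vᵢ` so that, in the limit, the pieces on either side form a
basis of the topology. The pieces then determine a homeomorphism `h` with `h⁻¹ Vᵢ = Uᵢ`, and as
the `Vᵢ` form a π-system generating the Borel sets, `h` carries `μ` to `ν`. -/

open Set Filter

section

variable {X Y : Type*}

namespace IsCompactOpen

variable [TopologicalSpace X] {U V : Set X}

theorem inter [T2Space X] (hU : IsCompactOpen U) (hV : IsCompactOpen V) :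
    IsCompactOpen (U ∩ V) :=
  ⟨hU.1.inter_right hV.1.isClosed, hU.2.inter hV.2⟩

theorem diff [T2Space X] (hU : IsCompactOpen U) (hV : IsCompactOpen V) :
    IsCompactOpen (U \ V) :=
  ⟨hU.1.diff hV.2, hU.2.sdiff hV.1.isClosed⟩

theorem union (hU : IsCompactOpen U) (hV : IsCompactOpen V) : IsCompactOpen (U ∪ V) :=
  ⟨hU.1.union hV.1, hU.2.union hV.2⟩

theorem biUnion {ι : Type*} {s : Set ι} {f : ι → Set X} (hs : s.Finite)
    (hf : ∀ i ∈ s, IsCompactOpen (f i)) : IsCompactOpen (⋃ i ∈ s, f i) :=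
  ⟨hs.isCompact_biUnion fun i hi => (hf i hi).1, isOpen_biUnion fun i hi => (hf i hi).2⟩

theorem measurableSet [MeasurableSpace X] [OpensMeasurableSpace X] (hU : IsCompactOpen U) :
    MeasurableSet U :=
  hU.2.measurableSet

end IsCompactOpen

namespace HasCompactOpenBasis

variable [TopologicalSpace X]

theorem exists_seq [Nonempty X] (hX : HasCompactOpenBasis X) :
    ∃ b : ℕ → Set X, (∀ n, IsCompactOpen (b n)) ∧ IsTopologicalBasis (range b) := by
  obtain ⟨B, hBc, hB, hBco⟩ := hX
  obtain ⟨x⟩ := ‹Nonempty X›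
  obtain ⟨U, hU, -⟩ := hB.exists_subset_of_mem_open (mem_univ x) isOpen_univ
  obtain ⟨b, rfl⟩ := hBc.exists_eq_range ⟨U, hU⟩
  exact ⟨b, fun n => hBco _ (mem_range_self n), hB⟩

theorem exists_lt_measure_inter [MeasurableSpace X] (hX : HasCompactOpenBasis X)
    {μ : Measure X} {S : Set X} {t : ℝ≥0∞} (ht : t < μ S) :
    ∃ K, IsCompactOpen K ∧ t < μ (K ∩ S) := by
  have : Nonempty X := (nonempty_of_measure_ne_zero (pos_of_gt ht).ne').to_subtype.map (↑)
  obtain ⟨b, hb, hbB⟩ := hX.exists_seq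
  have hlim : Tendsto (fun n => μ (accumulate b n ∩ S)) atTop (𝓝 (μ S)) := by
    have := tendsto_measure_iUnion_atTop (μ := μ)
      ((monotone_accumulate (s := b)).inter (monotone_const (c := S)))
    rwa [← iUnion_inter, iUnion_accumulate, ← sUnion_range, hbB.sUnion_eq, univ_inter] at this
  obtain ⟨n, hn⟩ := (hlim.eventually (eventually_gt_nhds ht)).exists
  exact ⟨accumulate b n, IsCompactOpen.biUnion (finite_le_nat n) fun k _ => hb k, hn⟩

end HasCompactOpenBasis

section Measures

variable [TopologicalSpace X] [MeasurableSpace X] {μ : Measure X}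

theorem IsFull.measure_compl_pos [T2Space X] [NoncompactSpace X] (hμ : IsFull μ) {K : Set X}
    (hK : IsCompact K) : 0 < μ Kᶜ :=
  hμ _ hK.isClosed.isOpen_compl (nonempty_compl.2 hK.ne_univ)

theorem measure_mem_SE (μ : Measure X) [IsFiniteMeasure μ] {U : Set X} (hU : IsCompactOpen U) :
    μ U ∈ SE μ :=
  ⟨measure_ne_top μ U, U, hU, rfl⟩

theorem SE_eq_image_Sreal [IsFiniteMeasure μ] : SE μ = ENNReal.ofReal '' Sreal μ := by
  ext v
  constructor
  · rintro ⟨hv, U, hU, rfl⟩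
    exact ⟨_, ⟨U, hU, hv, rfl⟩, ofReal_toReal hv⟩
  · rintro ⟨_, ⟨U, hU, hU', rfl⟩, rfl⟩
    exact ⟨ofReal_ne_top, U, hU, (ofReal_toReal hU').symm⟩

theorem Good.exists_subset_measure_eq (hμ : Good μ) {V : Set X} (hV : IsCompactOpen V)
    {t : ℝ≥0∞} (ht : t ∈ SE μ) (htV : t ≤ μ V) : ∃ W ⊆ V, IsCompactOpen W ∧ μ W = t := by
  obtain ⟨-, U, hU, rfl⟩ := ht
  rcases htV.eq_or_lt with h | h
  · exact ⟨V, subset_rfl, hV, h.symm⟩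
  · exact hμ V hV U hU h

theorem Good.exists_disjoint_measure_eq [T2Space X] (hμ : Good μ) (hX : HasCompactOpenBasis X)
    {B : Set X} (hB : IsCompactOpen B) {t : ℝ≥0∞} (ht : t ∈ SE μ) (htB : t < μ Bᶜ) :
    ∃ W, IsCompactOpen W ∧ Disjoint W B ∧ μ W = t := by
  obtain ⟨K, hK, hKt⟩ := hX.exists_lt_measure_inter htB
  rw [← sdiff_eq] at hKt
  obtain ⟨W, hWK, hW, rfl⟩ := hμ.exists_subset_measure_eq (hK.diff hB) ht hKt.le
  exact ⟨W, hW, disjoint_sdiff_left.mono_left hWK, rfl⟩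

end Measures

structure Refines (L L' : Set (Set X × Set Y)) : Prop where
  exists_fst : ∀ p ∈ L, ∀ x ∈ p.1, ∃ q ∈ L', x ∈ q.1
  exists_snd : ∀ p ∈ L, ∀ y ∈ p.2, ∃ q ∈ L', y ∈ q.2
  subset_of_meets : ∀ p ∈ L, ∀ q ∈ L',
    (p.1 ∩ q.1).Nonempty ∨ (p.2 ∩ q.2).Nonempty → q.1 ⊆ p.1 ∧ q.2 ⊆ p.2

namespace Refines

variable {L L' L'' : Set (Set X × Set Y)}

theorem swap (h : Refines L L') : Refines (Prod.swap ⁻¹' L) (Prod.swap ⁻¹' L') where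
  exists_fst p hp x hx :=
    let ⟨q, hq, hxq⟩ := h.exists_snd p.swap hp x hx
    ⟨q.swap, hq, hxq⟩
  exists_snd p hp y hy :=
    let ⟨q, hq, hyq⟩ := h.exists_fst p.swap hp y hy
    ⟨q.swap, hq, hyq⟩
  subset_of_meets p hp q hq hpq := (h.subset_of_meets p.swap hp q.swap hq hpq.symm).symm

theorem trans (h : Refines L L') (h' : Refines L' L'') : Refines L L'' where
  exists_fst p hp x hx :=
    let ⟨q, hq, hxq⟩ := h.exists_fst p hp x hx
    h'.exists_fst q hq x hxq
  exists_snd p hp y hy :=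
    let ⟨q, hq, hyq⟩ := h.exists_snd p hp y hy
    h'.exists_snd q hq y hyq
  subset_of_meets p hp r hr hpr := by
    obtain ⟨q, hq, hqp, hrq⟩ : ∃ q ∈ L', (q.1 ⊆ p.1 ∧ q.2 ⊆ p.2) ∧ (r.1 ⊆ q.1 ∧ r.2 ⊆ q.2) := by
      rcases hpr with ⟨x, hxp, hxr⟩ | ⟨y, hyp, hyr⟩
      · obtain ⟨q, hq, hxq⟩ := h.exists_fst p hp x hxp
        exact ⟨q, hq, h.subset_of_meets p hp q hq (.inl ⟨x, hxp, hxq⟩),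
          h'.subset_of_meets q hq r hr (.inl ⟨x, hxq, hxr⟩)⟩
      · obtain ⟨q, hq, hyq⟩ := h.exists_snd p hp y hyp
        exact ⟨q, hq, h.subset_of_meets p hp q hq (.inr ⟨y, hyp, hyq⟩),
          h'.subset_of_meets q hq r hr (.inr ⟨y, hyq, hyr⟩)⟩
    exact ⟨hrq.1.trans hqp.1, hrq.2.trans hqp.2⟩

theorem exists_fst_subset (h : Refines L L') {x : X} {O : Set X}
    (hx : ∃ p ∈ L, x ∈ p.1 ∧ p.1 ⊆ O) : ∃ q ∈ L', x ∈ q.1 ∧ q.1 ⊆ O := by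
  obtain ⟨p, hp, hxp, hpO⟩ := hx
  obtain ⟨q, hq, hxq⟩ := h.exists_fst p hp x hxp
  exact ⟨q, hq, hxq, (h.subset_of_meets p hp q hq (.inl ⟨x, hxp, hxq⟩)).1.trans hpO⟩

end Refines

section

variable [TopologicalSpace X] [TopologicalSpace Y] [MeasurableSpace X] [MeasurableSpace Y]
  {μ : Measure X} {ν : Measure Y}

structure Matching (μ : Measure X) (ν : Measure Y) (L : Set (Set X × Set Y)) : Prop where
  finite : L.Finite
  isCompactOpen_fst : ∀ p ∈ L, IsCompactOpen p.1
  isCompactOpen_snd : ∀ p ∈ L, IsCompactOpen p.2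
  measure_eq : ∀ p ∈ L, μ p.1 = ν p.2
  pairwiseDisjoint_fst : L.PairwiseDisjoint Prod.fst
  pairwiseDisjoint_snd : L.PairwiseDisjoint Prod.snd

theorem matching_empty : Matching μ ν ∅ where
  finite := finite_empty
  isCompactOpen_fst := by simp
  isCompactOpen_snd := by simp
  measure_eq := by simp
  pairwiseDisjoint_fst := pairwiseDisjoint_empty
  pairwiseDisjoint_snd := pairwiseDisjoint_empty

namespace Matching

variable {L L' : Set (Set X × Set Y)}

theorem swap (hL : Matching μ ν L) : Matching ν μ (Prod.swap ⁻¹' L) where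
  finite := hL.finite.preimage Prod.swap_injective.injOn
  isCompactOpen_fst p hp := hL.isCompactOpen_snd p.swap hp
  isCompactOpen_snd p hp := hL.isCompactOpen_fst p.swap hp
  measure_eq p hp := (hL.measure_eq p.swap hp).symm
  pairwiseDisjoint_fst _ hp _ hq hpq := hL.pairwiseDisjoint_snd hp hq (Prod.swap_injective.ne hpq)
  pairwiseDisjoint_snd _ hp _ hq hpq := hL.pairwiseDisjoint_fst hp hq (Prod.swap_injective.ne hpq)

theorem refines_of_subset (hL' : Matching μ ν L') (h : L ⊆ L') : Refines L L' where
  exists_fst p hp x hx := ⟨p, h hp, hx⟩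
  exists_snd p hp y hy := ⟨p, h hp, hy⟩
  subset_of_meets p hp q hq hpq := by
    obtain rfl : p = q := by
      rcases hpq with hpq | hpq
      · exact hL'.pairwiseDisjoint_fst.elim (h hp) hq (not_disjoint_iff_nonempty_inter.2 hpq)
      · exact hL'.pairwiseDisjoint_snd.elim (h hp) hq (not_disjoint_iff_nonempty_inter.2 hpq)
    exact ⟨subset_rfl, subset_rfl⟩

theorem nonempty_snd (hL : Matching μ ν L) (hμ : IsFull μ) {p : Set X × Set Y} (hp : p ∈ L)
    (hne : p.1.Nonempty) : p.2.Nonempty :=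
  nonempty_of_measure_ne_zero <|
    hL.measure_eq p hp ▸ (hμ _ (hL.isCompactOpen_fst p hp).2 hne).ne'

theorem measure_biUnion_fst_eq [OpensMeasurableSpace X] [OpensMeasurableSpace Y]
    (hL : Matching μ ν L) : μ (⋃ p ∈ L, p.1) = ν (⋃ p ∈ L, p.2) := by
  rw [measure_biUnion hL.finite.countable hL.pairwiseDisjoint_fst
      fun p hp => (hL.isCompactOpen_fst p hp).measurableSet,
    measure_biUnion hL.finite.countable hL.pairwiseDisjoint_snd
      fun p hp => (hL.isCompactOpen_snd p hp).measurableSet]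
  exact tsum_congr fun p => hL.measure_eq p p.2

theorem insert_of_disjoint (hL : Matching μ ν L) {U : Set X} {V : Set Y} (hU : IsCompactOpen U)
    (hV : IsCompactOpen V) (hUV : μ U = ν V) (hUL : ∀ p ∈ L, Disjoint U p.1)
    (hVL : ∀ p ∈ L, Disjoint V p.2) : Matching μ ν (insert (U, V) L) where
  finite := hL.finite.insert _
  isCompactOpen_fst := forall_mem_insert.2 ⟨hU, hL.isCompactOpen_fst⟩
  isCompactOpen_snd := forall_mem_insert.2 ⟨hV, hL.isCompactOpen_snd⟩
  measure_eq := forall_mem_insert.2 ⟨hUV, hL.measure_eq⟩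
  pairwiseDisjoint_fst := hL.pairwiseDisjoint_fst.insert fun p hp _ => hUL p hp
  pairwiseDisjoint_snd := hL.pairwiseDisjoint_snd.insert fun p hp _ => hVL p hp

theorem biUnion (hL : Matching μ ν L) {M : Set X × Set Y → Set (Set X × Set Y)}
    (hM : ∀ p ∈ L, Matching μ ν (M p)) (hM₁ : ∀ p ∈ L, ⋃ q ∈ M p, q.1 = p.1)
    (hM₂ : ∀ p ∈ L, ⋃ q ∈ M p, q.2 = p.2) : Matching μ ν (⋃ p ∈ L, M p) where
  finite := hL.finite.biUnion fun p hp => (hM p hp).finite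
  isCompactOpen_fst := by
    simp only [mem_iUnion₂]
    rintro q ⟨p, hp, hq⟩
    exact (hM p hp).isCompactOpen_fst q hq
  isCompactOpen_snd := by
    simp only [mem_iUnion₂]
    rintro q ⟨p, hp, hq⟩
    exact (hM p hp).isCompactOpen_snd q hq
  measure_eq := by
    simp only [mem_iUnion₂]
    rintro q ⟨p, hp, hq⟩
    exact (hM p hp).measure_eq q hq
  pairwiseDisjoint_fst := .biUnion (hL.pairwiseDisjoint_fst.mono_on fun p hp => (hM₁ p hp).le)
    fun p hp => (hM p hp).pairwiseDisjoint_fst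
  pairwiseDisjoint_snd := .biUnion (hL.pairwiseDisjoint_snd.mono_on fun p hp => (hM₂ p hp).le)
    fun p hp => (hM p hp).pairwiseDisjoint_snd

theorem refines_biUnion (hL : Matching μ ν L) {M : Set X × Set Y → Set (Set X × Set Y)}
    (hM₁ : ∀ p ∈ L, ⋃ q ∈ M p, q.1 = p.1) (hM₂ : ∀ p ∈ L, ⋃ q ∈ M p, q.2 = p.2) :
    Refines L (⋃ p ∈ L, M p) where
  exists_fst p hp x hx := by
    rw [← hM₁ p hp, mem_iUnion₂] at hx
    obtain ⟨q, hq, hxq⟩ := hx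
    exact ⟨q, mem_iUnion₂.2 ⟨p, hp, hq⟩, hxq⟩
  exists_snd p hp y hy := by
    rw [← hM₂ p hp, mem_iUnion₂] at hy
    obtain ⟨q, hq, hyq⟩ := hy
    exact ⟨q, mem_iUnion₂.2 ⟨p, hp, hq⟩, hyq⟩
  subset_of_meets p hp q hq hpq := by
    obtain ⟨p', hp', hq⟩ := mem_iUnion₂.1 hq
    have hq₁ : q.1 ⊆ p'.1 := hM₁ p' hp' ▸ subset_biUnion_of_mem (u := Prod.fst) hq
    have hq₂ : q.2 ⊆ p'.2 := hM₂ p' hp' ▸ subset_biUnion_of_mem (u := Prod.snd) hq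
    obtain rfl : p = p' := by
      rcases hpq with hpq | hpq
      · exact hL.pairwiseDisjoint_fst.elim hp hp'
          (not_disjoint_iff_nonempty_inter.2 (hpq.mono (inter_subset_inter_right _ hq₁)))
      · exact hL.pairwiseDisjoint_snd.elim hp hp'
          (not_disjoint_iff_nonempty_inter.2 (hpq.mono (inter_subset_inter_right _ hq₂)))
    exact ⟨hq₁, hq₂⟩

end Matching

end

section Construction

variable [TopologicalSpace X] [T2Space X] [MeasurableSpace X] [OpensMeasurableSpace X]
  [TopologicalSpace Y] [T2Space Y] [MeasurableSpace Y] [OpensMeasurableSpace Y]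
  {μ : Measure X} {ν : Measure Y}

theorem exists_matching_subset_or_disjoint [IsFiniteMeasure μ] (hν : Good ν)
    (hS : SE μ ⊆ SE ν) {U : Set X} {V : Set Y} (hU : IsCompactOpen U) (hV : IsCompactOpen V)
    (hUV : μ U = ν V) {b : Set X} (hb : IsCompactOpen b) :
    ∃ M : Set (Set X × Set Y), Matching μ ν M ∧ ⋃ q ∈ M, q.1 = U ∧ ⋃ q ∈ M, q.2 = V ∧
      ∀ q ∈ M, q.1 ⊆ b ∨ Disjoint q.1 b := by
  obtain ⟨W, hWV, hW, hWU⟩ := hν.exists_subset_measure_eq hV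
    (hS (measure_mem_SE μ (hU.inter hb))) (hUV ▸ measure_mono inter_subset_left)
  have hdiff : μ (U \ b) = ν (V \ W) := by
    have hμU := measure_inter_add_sdiff U hb.measurableSet (μ := μ)
    have hνV := measure_inter_add_sdiff V hW.measurableSet (μ := ν)
    rw [inter_eq_right.2 hWV, hWU, ← hUV, ← hμU] at hνV
    exact ((ENNReal.add_right_inj (measure_ne_top μ _)).1 hνV).symm
  refine ⟨{(U ∩ b, W), (U \ b, V \ W)}, ⟨toFinite _, ?_, ?_, ?_, ?_, ?_⟩, ?_, ?_, ?_⟩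
  · simpa using ⟨hU.inter hb, hU.diff hb⟩
  · simpa using ⟨hW, hV.diff hW⟩
  · simpa using ⟨hWU.symm, hdiff⟩
  · exact (pairwiseDisjoint_singleton _ _).insert fun q hq _ => by
      rw [mem_singleton_iff.1 hq]
      exact disjoint_sdiff_inter.symm
  · exact (pairwiseDisjoint_singleton _ _).insert fun q hq _ => by
      rw [mem_singleton_iff.1 hq]
      exact disjoint_sdiff_right
  · simp
  · simp [union_sdiff_cancel hWV]
  · simp [inter_subset_right, disjoint_sdiff_left]

namespace Matching

variable {L : Set (Set X × Set Y)}

theorem exists_refines_subset_or_disjoint [IsFiniteMeasure μ] (hL : Matching μ ν L) (hν : Good ν)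
    (hS : SE μ ⊆ SE ν) {b : Set X} (hb : IsCompactOpen b) :
    ∃ L', Matching μ ν L' ∧ Refines L L' ∧ ∀ q ∈ L', q.1 ⊆ b ∨ Disjoint q.1 b := by
  choose! M hM hM₁ hM₂ hMb using fun p (hp : p ∈ L) =>
    exists_matching_subset_or_disjoint hν hS (hL.isCompactOpen_fst p hp)
      (hL.isCompactOpen_snd p hp) (hL.measure_eq p hp) hb
  refine ⟨⋃ p ∈ L, M p, hL.biUnion hM hM₁ hM₂, hL.refines_biUnion hM₁ hM₂, ?_⟩
  simp only [mem_iUnion₂]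
  rintro q ⟨p, hp, hq⟩
  exact hMb p hp q hq

theorem exists_superset_cover [IsProbabilityMeasure μ] [IsProbabilityMeasure ν]
    [NoncompactSpace X] (hL : Matching μ ν L) (hμ : IsFull μ)
    (hν : Good ν) (hS : SE μ ⊆ SE ν) (hY : HasCompactOpenBasis Y) {C : Set X}
    (hC : IsCompactOpen C) : ∃ L', Matching μ ν L' ∧ L ⊆ L' ∧ C ⊆ ⋃ q ∈ L', q.1 := by
  set A := ⋃ p ∈ L, p.1
  set B := ⋃ p ∈ L, p.2
  have hA : IsCompactOpen A := .biUnion hL.finite hL.isCompactOpen_fst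
  have hB : IsCompactOpen B := .biUnion hL.finite hL.isCompactOpen_snd
  have hlt : μ (C \ A) < ν Bᶜ := by
    have hAc : Aᶜ = (C \ A) ∪ (C ∪ A)ᶜ := by
      ext x
      simp only [mem_compl_iff, mem_union, Set.mem_sdiff]
      tauto
    have hdisj : Disjoint (C \ A) (C ∪ A)ᶜ :=
      disjoint_compl_right.mono_left (sdiff_subset.trans subset_union_left)
    rw [prob_compl_eq_one_sub hB.measurableSet, ← hL.measure_biUnion_fst_eq,
      ← prob_compl_eq_one_sub hA.measurableSet, hAc,
      measure_union hdisj (hC.union hA).measurableSet.compl]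
    exact ENNReal.lt_add_right (measure_ne_top μ _) (hμ.measure_compl_pos (hC.union hA).1).ne'
  obtain ⟨W, hW, hWB, hWm⟩ :=
    hν.exists_disjoint_measure_eq hY hB (hS (measure_mem_SE μ (hC.diff hA))) hlt
  refine ⟨insert (C \ A, W) L, hL.insert_of_disjoint (hC.diff hA) hW hWm.symm
    (fun p hp => disjoint_sdiff_left.mono_right (subset_biUnion_of_mem (u := Prod.fst) hp))
    (fun p hp => hWB.mono_right (subset_biUnion_of_mem (u := Prod.snd) hp)),
    subset_insert _ _, fun x hx => ?_⟩
  by_cases hxA : x ∈ A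
  · obtain ⟨p, hp, hxp⟩ := mem_iUnion₂.1 hxA
    exact mem_iUnion₂.2 ⟨p, mem_insert_of_mem _ hp, hxp⟩
  · exact mem_iUnion₂.2 ⟨_, mem_insert _ _, hx, hxA⟩

theorem exists_refines_fst_subset [IsProbabilityMeasure μ] [IsProbabilityMeasure ν]
    [NoncompactSpace X] (hL : Matching μ ν L) (hμ : IsFull μ)
    (hν : Good ν) (hS : SE μ ⊆ SE ν) (hY : HasCompactOpenBasis Y) {b : Set X}
    (hb : IsCompactOpen b) :
    ∃ L', Matching μ ν L' ∧ Refines L L' ∧ ∀ x ∈ b, ∃ q ∈ L', x ∈ q.1 ∧ q.1 ⊆ b := by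
  obtain ⟨L₁, hL₁, hLL₁, hbL₁⟩ := hL.exists_superset_cover hμ hν hS hY hb
  obtain ⟨L₂, hL₂, hL₁₂, hL₂b⟩ := hL₁.exists_refines_subset_or_disjoint hν hS hb
  refine ⟨L₂, hL₂, (hL₁.refines_of_subset hLL₁).trans hL₁₂, fun x hx => ?_⟩
  obtain ⟨p, hp, hxp⟩ := mem_iUnion₂.1 (hbL₁ hx)
  obtain ⟨q, hq, hxq⟩ := hL₁₂.exists_fst p hp x hxp
  exact ⟨q, hq, hxq, (hL₂b q hq).resolve_right (not_disjoint_iff.2 ⟨x, hxq, hx⟩)⟩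

theorem exists_refines_snd_subset [IsProbabilityMeasure μ] [IsProbabilityMeasure ν]
    [NoncompactSpace Y] (hL : Matching μ ν L) (hν : IsFull ν)
    (hμ : Good μ) (hS : SE ν ⊆ SE μ) (hX : HasCompactOpenBasis X) {c : Set Y}
    (hc : IsCompactOpen c) :
    ∃ L', Matching μ ν L' ∧ Refines L L' ∧ ∀ y ∈ c, ∃ q ∈ L', y ∈ q.2 ∧ q.2 ⊆ c := by
  obtain ⟨L', hL', hLL', hcL'⟩ := hL.swap.exists_refines_fst_subset hν hμ hS hX hc
  refine ⟨Prod.swap ⁻¹' L', hL'.swap, hLL'.swap, fun y hy => ?_⟩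
  obtain ⟨q, hq, hyq, hqc⟩ := hcL' y hy
  exact ⟨q.swap, hq, hyq, hqc⟩

end Matching

end Construction

section Limit

variable [TopologicalSpace X] [MeasurableSpace X] [TopologicalSpace Y] [MeasurableSpace Y]
  {μ : Measure X} {ν : Measure Y}

structure MatchingSeq (μ : Measure X) (ν : Measure Y) (P : ℕ → Set (Set X × Set Y)) : Prop where
  matching : ∀ n, Matching μ ν (P n)
  refines : ∀ n, Refines (P n) (P (n + 1))
  exists_fst_subset : ∀ x O, IsOpen O → x ∈ O → ∃ n, ∃ p ∈ P n, x ∈ p.1 ∧ p.1 ⊆ O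
  exists_snd_subset : ∀ y O, IsOpen O → y ∈ O → ∃ n, ∃ p ∈ P n, y ∈ p.2 ∧ p.2 ⊆ O

namespace MatchingSeq

variable {P : ℕ → Set (Set X × Set Y)}

theorem swap (h : MatchingSeq μ ν P) : MatchingSeq ν μ fun n => Prod.swap ⁻¹' P n where
  matching n := (h.matching n).swap
  refines n := (h.refines n).swap
  exists_fst_subset y O hO hy :=
    let ⟨n, p, hp, hyp, hpO⟩ := h.exists_snd_subset y O hO hy
    ⟨n, p.swap, hp, hyp, hpO⟩
  exists_snd_subset x O hO hx :=
    let ⟨n, p, hp, hxp, hpO⟩ := h.exists_fst_subset x O hO hx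
    ⟨n, p.swap, hp, hxp, hpO⟩

theorem refines_of_le (h : MatchingSeq μ ν P) {m n : ℕ} (hmn : m ≤ n) : Refines (P m) (P n) := by
  induction n, hmn using Nat.le_induction with
  | base => exact (h.matching m).refines_of_subset subset_rfl
  | succ n _ ih => exact ih.trans (h.refines n)

theorem exists_forall_mem_snd [T2Space Y] (h : MatchingSeq μ ν P) (hμ : IsFull μ) (x : X) :
    ∃ y, ∀ n, ∀ p ∈ P n, x ∈ p.1 → y ∈ p.2 := by
  let I := {i : ℕ × (Set X × Set Y) // i.2 ∈ P i.1 ∧ x ∈ i.2.1}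
  have : Nonempty I :=
    let ⟨n, p, hp, hxp, _⟩ := h.exists_fst_subset x univ isOpen_univ trivial
    ⟨⟨(n, p), hp, hxp⟩⟩
  have hdir : Directed (· ⊇ ·) fun i : I => i.1.2.2 := by
    rintro ⟨⟨m, p⟩, hp, hxp⟩ ⟨⟨n, q⟩, hq, hxq⟩
    rcases le_total m n with hmn | hnm
    · exact ⟨⟨(n, q), hq, hxq⟩,
        ((h.refines_of_le hmn).subset_of_meets p hp q hq (.inl ⟨x, hxp, hxq⟩)).2, subset_rfl⟩
    · exact ⟨⟨(m, p), hp, hxp⟩, subset_rfl,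
        ((h.refines_of_le hnm).subset_of_meets q hq p hp (.inl ⟨x, hxq, hxp⟩)).2⟩
  have hcpt (i : I) : IsCompact i.1.2.2 := ((h.matching _).isCompactOpen_snd _ i.2.1).1
  obtain ⟨y, hy⟩ := IsCompact.nonempty_iInter_of_directed_nonempty_isCompact_isClosed _ hdir
    (fun i => (h.matching _).nonempty_snd hμ i.2.1 ⟨x, i.2.2⟩) hcpt fun i => (hcpt i).isClosed
  exact ⟨y, fun n p hp hxp => mem_iInter.1 hy ⟨(n, p), hp, hxp⟩⟩

theorem eq_of_forall_mem_fst [T1Space X] (h : MatchingSeq μ ν P) {x x' : X}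
    (hx : ∀ n, ∀ p ∈ P n, x ∈ p.1 → x' ∈ p.1) : x' = x := by
  by_contra hne
  obtain ⟨n, p, hp, hxp, hpO⟩ :=
    h.exists_fst_subset x {x'}ᶜ isOpen_compl_singleton (Ne.symm hne)
  exact hpO (hx n p hp hxp) rfl

theorem continuous_of_preimage_eq (h : MatchingSeq μ ν P) {f : X → Y}
    (hf : ∀ n, ∀ p ∈ P n, f ⁻¹' p.2 = p.1) : Continuous f := by
  refine continuous_def.2 fun O hO => isOpen_iff_forall_mem_open.2 fun x hx => ?_
  obtain ⟨n, p, hp, hxp, hpO⟩ := h.exists_snd_subset (f x) O hO hx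
  refine ⟨f ⁻¹' p.2, preimage_mono hpO, ?_, hxp⟩
  rw [hf n p hp]
  exact ((h.matching n).isCompactOpen_fst p hp).2

theorem exists_homeomorph [T2Space X] [T2Space Y] (h : MatchingSeq μ ν P) (hμ : IsFull μ)
    (hν : IsFull ν) : ∃ e : X ≃ₜ Y, ∀ n, ∀ p ∈ P n, e ⁻¹' p.2 = p.1 := by
  choose f hf using h.exists_forall_mem_snd hμ
  choose g hg using h.swap.exists_forall_mem_snd hν
  let e : X ≃ Y :=
    { toFun := f
      invFun := g
      left_inv := fun x => h.eq_of_forall_mem_fst fun n p hp hxp =>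
        hg (f x) n p.swap hp (hf x n p hp hxp)
      right_inv := fun y => h.swap.eq_of_forall_mem_fst fun n q hq hyq =>
        hf (g y) n q.swap hq (hg y n q hq hyq) }
  have he : ∀ n, ∀ p ∈ P n, e ⁻¹' p.2 = p.1 := fun n p hp =>
    Subset.antisymm (fun x hx => e.symm_apply_apply x ▸ hg (f x) n p.swap hp hx)
      fun x hx => hf x n p hp hx
  have he' : ∀ n, ∀ p ∈ P n, e.symm ⁻¹' p.1 = p.2 := fun n p hp => by
    rw [← he n p hp, e.symm_preimage_preimage]
  exact ⟨⟨e, h.continuous_of_preimage_eq he,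
    h.swap.continuous_of_preimage_eq fun n q hq => he' n q.swap hq⟩, he⟩

theorem map_eq [BorelSpace Y] [IsFiniteMeasure μ] (h : MatchingSeq μ ν P) {f : X → Y}
    (hfm : Measurable f) (hf : ∀ n, ∀ p ∈ P n, f ⁻¹' p.2 = p.1) (huniv : μ univ = ν univ) :
    μ.map f = ν := by
  set C := ⋃ n, Prod.snd '' P n
  have hmemC {s : Set Y} : s ∈ C ↔ ∃ n, ∃ p ∈ P n, p.2 = s := by simp [C]
  have hC : IsTopologicalBasis C := by
    refine isTopologicalBasis_of_isOpen_of_nhds (fun s hs => ?_) fun y O hyO hO => ?_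
    · obtain ⟨n, p, hp, rfl⟩ := hmemC.1 hs
      exact ((h.matching n).isCompactOpen_snd p hp).2
    · obtain ⟨n, p, hp, hyp, hpO⟩ := h.exists_snd_subset y O hO hyO
      exact ⟨p.2, hmemC.2 ⟨n, p, hp, rfl⟩, hyp, hpO⟩
  have := hC.secondCountableTopology <|
    countable_iUnion fun n => ((h.matching n).finite.image _).countable
  refine ext_of_generate_finite C (BorelSpace.measurable_eq.trans hC.borel_eq_generateFrom) ?_ ?_
    (by rw [Measure.map_apply hfm MeasurableSet.univ, preimage_univ, huniv])
  · intro s hs t ht hst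
    obtain ⟨m, p, hp, rfl⟩ := hmemC.1 hs
    obtain ⟨n, q, hq, rfl⟩ := hmemC.1 ht
    rcases le_total m n with hmn | hnm
    · rw [inter_eq_right.2 ((h.refines_of_le hmn).subset_of_meets p hp q hq (.inr hst)).2]
      exact ht
    · rw [inter_comm] at hst ⊢
      rw [inter_eq_right.2 ((h.refines_of_le hnm).subset_of_meets q hq p hp (.inr hst)).2]
      exact hs
  · intro s hs
    obtain ⟨n, p, hp, rfl⟩ := hmemC.1 hs
    rw [Measure.map_apply hfm ((h.matching n).isCompactOpen_snd p hp).2.measurableSet, hf n p hp,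
      (h.matching n).measure_eq p hp]

end MatchingSeq

end Limit

theorem exists_matchingSeq [TopologicalSpace X] [T2Space X] [MeasurableSpace X]
    [OpensMeasurableSpace X] [NoncompactSpace X] [TopologicalSpace Y] [T2Space Y]
    [MeasurableSpace Y] [OpensMeasurableSpace Y] [NoncompactSpace Y]
    (hX : HasCompactOpenBasis X) (hY : HasCompactOpenBasis Y)
    {μ : Measure X} {ν : Measure Y} [IsProbabilityMeasure μ] [IsProbabilityMeasure ν]
    (hμ : IsFull μ) (hν : IsFull ν) (hgμ : Good μ) (hgν : Good ν) (hS : SE μ = SE ν) :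
    ∃ P, MatchingSeq μ ν P := by
  have : Nonempty X := nonempty_of_isProbabilityMeasure μ
  have : Nonempty Y := nonempty_of_isProbabilityMeasure ν
  obtain ⟨b, hb, hbB⟩ := hX.exists_seq
  obtain ⟨c, hc, hcB⟩ := hY.exists_seq
  have step (n : ℕ) (L : Set (Set X × Set Y)) (hL : Matching μ ν L) :
      ∃ L', Matching μ ν L' ∧ Refines L L' ∧ (∀ x ∈ b n, ∃ q ∈ L', x ∈ q.1 ∧ q.1 ⊆ b n) ∧
        ∀ y ∈ c n, ∃ q ∈ L', y ∈ q.2 ∧ q.2 ⊆ c n := by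
    obtain ⟨L₁, hL₁, hLL₁, hbL₁⟩ := hL.exists_refines_fst_subset hμ hgν hS.le hY (hb n)
    obtain ⟨L₂, hL₂, hL₁₂, hcL₂⟩ := hL₁.exists_refines_snd_subset hν hgμ hS.ge hX (hc n)
    exact ⟨L₂, hL₂, hLL₁.trans hL₁₂, fun x hx => hL₁₂.exists_fst_subset (hbL₁ x hx), hcL₂⟩
  choose F hF using step
  let P (n : ℕ) : {L // Matching μ ν L} :=
    Nat.rec ⟨∅, matching_empty⟩ (fun n L => ⟨F n L.1 L.2, (hF n L.1 L.2).1⟩) n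
  refine ⟨fun n => (P n).1, ⟨fun n => (P n).2, fun n => (hF n _ (P n).2).2.1, ?_, ?_⟩⟩
  · intro x O hO hxO
    obtain ⟨_, ⟨n, rfl⟩, hxb, hbO⟩ := hbB.exists_subset_of_mem_open hxO hO
    obtain ⟨q, hq, hxq, hqb⟩ := (hF n _ (P n).2).2.2.1 x hxb
    exact ⟨n + 1, q, hq, hxq, hqb.trans hbO⟩
  · intro y O hO hyO
    obtain ⟨_, ⟨n, rfl⟩, hyc, hcO⟩ := hcB.exists_subset_of_mem_open hyO hO
    obtain ⟨q, hq, hyq, hqc⟩ := (hF n _ (P n).2).2.2.2 y hyc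
    exact ⟨n + 1, q, hq, hyq, hqc.trans hcO⟩

end

theorem stmt14_general {X Y : Type*}
    [TopologicalSpace X] [MeasurableSpace X] [BorelSpace X] [MetrizableSpace X]
    [NoncompactSpace X]
    [TopologicalSpace Y] [MeasurableSpace Y] [BorelSpace Y] [MetrizableSpace Y]
    [NoncompactSpace Y]
    (hBX : HasCompactOpenBasis X)
    (hBY : HasCompactOpenBasis Y)
    (μ : Measure X) (ν : Measure Y)
    [IsProbabilityMeasure μ] [IsProbabilityMeasure ν]
    (hfullμ : IsFull μ)
    (hfullν : IsFull ν)
    (hgμ : Good μ) (hgν : Good ν) (hS : Sreal μ = Sreal ν) :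
    ∃ h : X ≃ₜ Y, ∀ E : Set X, MeasurableSet E → μ E = ν (h '' E) := by
  have hSE : SE μ = SE ν := by rw [SE_eq_image_Sreal, SE_eq_image_Sreal, hS]
  obtain ⟨P, hP⟩ := exists_matchingSeq hBX hBY hfullμ hfullν hgμ hgν hSE
  obtain ⟨e, he⟩ := hP.exists_homeomorph hfullμ hfullν
  have hmap : μ.map e = ν := hP.map_eq e.measurable he (by simp)
  refine ⟨e, fun E _ => ?_⟩
  rw [← hmap, e.measurableEmbedding.map_apply, e.preimage_image]

theorem stmt14 {X Y : Type*}
    [TopologicalSpace X] [MeasurableSpace X] [BorelSpace X] [MetrizableSpace X]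
    [LocallyCompactSpace X] [TotallyDisconnectedSpace X] [NoncompactSpace X]
    [TopologicalSpace Y] [MeasurableSpace Y] [BorelSpace Y] [MetrizableSpace Y]
    [LocallyCompactSpace Y] [TotallyDisconnectedSpace Y] [NoncompactSpace Y]
    (hBX : HasCompactOpenBasis X) (hniX : NoIsolatedPoints X)
    (hBY : HasCompactOpenBasis Y) (hniY : NoIsolatedPoints Y)
    (μ : Measure X) (ν : Measure Y)
    [IsProbabilityMeasure μ] [IsProbabilityMeasure ν]
    (hfullμ : IsFull μ) (hnaμ : NonAtomic μ)
    (hfullν : IsFull ν) (hnaν : NonAtomic ν)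
    (hgμ : Good μ) (hgν : Good ν) (hS : Sreal μ = Sreal ν) :
    ∃ h : X ≃ₜ Y, ∀ E : Set X, MeasurableSet E → μ E = ν (h '' E) :=
  stmt14_general hBX hBY μ ν hfullμ hfullν hgμ hgν hS
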